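/- Let π be the group presented by ⟨g₁,…,g_a | r₁,…,r_b⟩, with presentation complex C₂ → C₁ → C₀ over ℤ[π] and derivation α: F → C₁ as above, and let γ: F → C₁ ⊗_ℤ C₁ be the unique map with γ(g_i) = 0 for all i and γ(uv) = γ(u) + u·γ(v) + α(u) ⊗ u·α(v). Then the ℤ[π]-module map Δ₀ determined by Δ₀(h⁰) = h⁰⊗h⁰, Δ₀(h¹_i) = h⁰⊗h¹_i + h¹_i⊗g_ih⁰, and Δ₀(h²_j) = h⁰⊗h²_j + h²_j⊗h⁰ − γ(r_j) is a chain map in degrees ≤ 2: ∂_⊗(Δ₀(h¹_i)) = Δ₀(∂₁h¹_i) and ∂_⊗(Δ₀(h²_j)) = Δ₀(∂₂h²_j) for all i, j (Trotter's diagonal chain approximation on the 2-skeleton, with the sign convention ∂_⊗(x⊗y) = x⊗∂y + (−1)^q ∂x⊗y). -/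

import Mathlib

/-!
Degree 1 is a direct computation. In degree 2 both sides are read as functions of the relator:
for `w ∈ F`, the maps `w ↦ Δ₀(α w)|_{C₀⊗C₁}` and `w ↦ 1 ⊗ α w + (∂₁ ⊗ 1)(γ w)`, and likewise
`w ↦ Δ₀(α w)|_{C₁⊗C₀}` and `w ↦ α w ⊗ w - (1 ⊗ ∂₁)(γ w)`, are crossed homomorphisms
`F → C ⊗ C` for the diagonal action through `ρ`: this is the derivation rule for `α`, the product
rule for `γ`, and `∂₁ α(w) = w - 1` (itself proved the same way). A crossed homomorphism on a free
group is determined by its values on the generators, where both sides visibly agree; evaluating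
at `rⱼ`, with `ρ(rⱼ) = 1`, gives the claim.
-/

open scoped TensorProduct

namespace stmt7

variable {π : Type*} [Group π]

/-- The action of `g ∈ π` on a left `ℤ[π]`-module, as a `ℤ`-linear map. -/
noncomputable def actL (M : Type*) [AddCommGroup M] [Module (MonoidAlgebra ℤ π) M]
    (g : π) : M →ₗ[ℤ] M :=
  (DistribMulAction.toAddMonoidHom M
    ((MonoidAlgebra.of ℤ π g) : MonoidAlgebra ℤ π)).toIntLinearMap

/-- The representation of `π` underlying a left `ℤ[π]`-module. -/
noncomputable def repOf (M : Type*) [AddCommGroup M] [Module (MonoidAlgebra ℤ π) M] :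
    Representation ℤ π M where
  toFun := actL M
  map_one' := by
    ext x
    change (MonoidAlgebra.of ℤ π 1 : MonoidAlgebra ℤ π) • x = x
    rw [map_one, one_smul]
  map_mul' g h := by
    ext x
    change (MonoidAlgebra.of ℤ π (g * h) : MonoidAlgebra ℤ π) • x
      = (MonoidAlgebra.of ℤ π g : MonoidAlgebra ℤ π)
        • (MonoidAlgebra.of ℤ π h : MonoidAlgebra ℤ π) • x
    rw [map_mul, mul_smul]

/-- The diagonal action of `x ∈ ℤ[π]` on `M ⊗_ℤ N` (`g·(m⊗n) = gm⊗gn`,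
extended `ℤ`-linearly), by which a `ℤ[π]`-module map into `M ⊗_ℤ N` is
determined by its values on basis elements. -/
noncomputable def diagT (M N : Type*) [AddCommGroup M] [Module (MonoidAlgebra ℤ π) M]
    [AddCommGroup N] [Module (MonoidAlgebra ℤ π) N] (x : MonoidAlgebra ℤ π) :
    (M ⊗[ℤ] N) →ₗ[ℤ] (M ⊗[ℤ] N) :=
  Representation.asAlgebraHom ((repOf M).tprod (repOf N)) x

variable (π)

/-- The image `gᵢ = ρ(gᵢ) ∈ ℤ[π]` of a generator. -/
noncomputable def giA {a : ℕ} (ρ : FreeGroup (Fin a) →* π) (i : Fin a) :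
    MonoidAlgebra ℤ π :=
  MonoidAlgebra.of ℤ π (ρ (FreeGroup.of i))

/-- `∂₁ : C₁ → C₀`, `h¹ᵢ ↦ (gᵢ-1)h⁰`, i.e. `x ↦ Σᵢ xᵢ(gᵢ-1)`. -/
noncomputable def d1L (a : ℕ) (ρ : FreeGroup (Fin a) →* π) :
    (Fin a → MonoidAlgebra ℤ π) →ₗ[ℤ] MonoidAlgebra ℤ π :=
  ∑ i : Fin a,
    (AddMonoidHom.mulRight (giA π ρ i - 1)).toIntLinearMap
      ∘ₗ (LinearMap.proj i : (Fin a → MonoidAlgebra ℤ π) →ₗ[ℤ] MonoidAlgebra ℤ π)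

/-- `∂₂ : C₂ → C₁`, `h²ⱼ ↦ α(rⱼ)`, i.e. `y ↦ Σⱼ yⱼ·α(rⱼ)`. -/
noncomputable def d2L (a b : ℕ) (ρ : FreeGroup (Fin a) →* π)
    (r : Fin b → FreeGroup (Fin a))
    (α : FreeGroup (Fin a) → (Fin a → MonoidAlgebra ℤ π)) :
    (Fin b → MonoidAlgebra ℤ π) →ₗ[ℤ] (Fin a → MonoidAlgebra ℤ π) :=
  ∑ j : Fin b,
    (LinearMap.toSpanSingleton (MonoidAlgebra ℤ π) (Fin a → MonoidAlgebra ℤ π)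
        (α (r j))).toAddMonoidHom.toIntLinearMap
      ∘ₗ (LinearMap.proj j : (Fin b → MonoidAlgebra ℤ π) →ₗ[ℤ] MonoidAlgebra ℤ π)

/-- `Δ₀` on `C₀`: the `ℤ[π]`-linear (for the diagonal action) extension of
`Δ₀(h⁰) = h⁰ ⊗ h⁰`. -/
noncomputable def D00 (x : MonoidAlgebra ℤ π) :
    MonoidAlgebra ℤ π ⊗[ℤ] MonoidAlgebra ℤ π :=
  diagT _ _ x ((1 : MonoidAlgebra ℤ π) ⊗ₜ[ℤ] (1 : MonoidAlgebra ℤ π))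

/-- The `C₀ ⊗ C₁`-component of `Δ₀` on `C₁`, extending `h⁰ ⊗ h¹ᵢ`. -/
noncomputable def D01 (a : ℕ) (ρ : FreeGroup (Fin a) →* π)
    (x : Fin a → MonoidAlgebra ℤ π) :
    MonoidAlgebra ℤ π ⊗[ℤ] (Fin a → MonoidAlgebra ℤ π) :=
  ∑ i : Fin a, diagT _ _ (x i)
    ((1 : MonoidAlgebra ℤ π) ⊗ₜ[ℤ] Pi.single i (1 : MonoidAlgebra ℤ π))

/-- The `C₁ ⊗ C₀`-component of `Δ₀` on `C₁`, extending `h¹ᵢ ⊗ gᵢh⁰`. -/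
noncomputable def D10 (a : ℕ) (ρ : FreeGroup (Fin a) →* π)
    (x : Fin a → MonoidAlgebra ℤ π) :
    (Fin a → MonoidAlgebra ℤ π) ⊗[ℤ] MonoidAlgebra ℤ π :=
  ∑ i : Fin a, diagT _ _ (x i)
    ((Pi.single i (1 : MonoidAlgebra ℤ π)) ⊗ₜ[ℤ] giA π ρ i)

/-- The `C₀ ⊗ C₂`-component of `Δ₀` on `C₂`, extending `h⁰ ⊗ h²ⱼ`. -/
noncomputable def D02 (a b : ℕ) (ρ : FreeGroup (Fin a) →* π)
    (y : Fin b → MonoidAlgebra ℤ π) :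
    MonoidAlgebra ℤ π ⊗[ℤ] (Fin b → MonoidAlgebra ℤ π) :=
  ∑ j : Fin b, diagT _ _ (y j)
    ((1 : MonoidAlgebra ℤ π) ⊗ₜ[ℤ] Pi.single j (1 : MonoidAlgebra ℤ π))

/-- The `C₁ ⊗ C₁`-component of `Δ₀` on `C₂`, extending `-γ(rⱼ)`. -/
noncomputable def D11 (a b : ℕ) (ρ : FreeGroup (Fin a) →* π)
    (r : Fin b → FreeGroup (Fin a))
    (γ : FreeGroup (Fin a) →
      (Fin a → MonoidAlgebra ℤ π) ⊗[ℤ] (Fin a → MonoidAlgebra ℤ π))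
    (y : Fin b → MonoidAlgebra ℤ π) :
    (Fin a → MonoidAlgebra ℤ π) ⊗[ℤ] (Fin a → MonoidAlgebra ℤ π) :=
  ∑ j : Fin b, diagT _ _ (y j) (-(γ (r j)))

/-- The `C₂ ⊗ C₀`-component of `Δ₀` on `C₂`, extending `h²ⱼ ⊗ h⁰`. -/
noncomputable def D20 (a b : ℕ) (ρ : FreeGroup (Fin a) →* π)
    (y : Fin b → MonoidAlgebra ℤ π) :
    (Fin b → MonoidAlgebra ℤ π) ⊗[ℤ] MonoidAlgebra ℤ π :=
  ∑ j : Fin b, diagT _ _ (y j)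
    ((Pi.single j (1 : MonoidAlgebra ℤ π)) ⊗ₜ[ℤ] (1 : MonoidAlgebra ℤ π))

end stmt7

namespace FreeGroup

variable {β R M : Type*} [CommSemiring R] [AddCommGroup M] [Module R M]

theorem cocycle_ext (φ : Representation R (FreeGroup β) M) {f g : FreeGroup β → M}
    (hf : ∀ u v, f (u * v) = f u + φ u (f v)) (hg : ∀ u v, g (u * v) = g u + φ u (g v))
    (hof : ∀ i, f (of i) = g (of i)) : f = g := by
  have map_one_eq_zero {h : FreeGroup β → M} (hh : ∀ u v, h (u * v) = h u + φ u (h v)) :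
      h 1 = 0 := by
    simpa using hh 1 1
  have map_inv_eq {h : FreeGroup β → M} (hh : ∀ u v, h (u * v) = h u + φ u (h v)) (u) :
      h u⁻¹ = -φ u⁻¹ (h u) := by
    have h_inv_mul := hh u⁻¹ u
    rw [inv_mul_cancel, map_one_eq_zero hh] at h_inv_mul
    exact eq_neg_of_add_eq_zero_left h_inv_mul.symm
  funext w
  induction w with
  | C1 => rw [map_one_eq_zero hf, map_one_eq_zero hg]
  | of i => exact hof i
  | inv_of i h => rw [map_inv_eq hf, map_inv_eq hg, h]
  | mul u v hu hv => rw [hf, hg, hu, hv]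

end FreeGroup

namespace stmt7

open MonoidAlgebra TensorProduct

variable {π : Type*} [Group π]

section DiagonalAction

variable {M N : Type*} [AddCommGroup M] [Module (MonoidAlgebra ℤ π) M]
  [AddCommGroup N] [Module (MonoidAlgebra ℤ π) N]

theorem repOf_apply (g : π) (m : M) : repOf M g m = (of ℤ π g : MonoidAlgebra ℤ π) • m := rfl

theorem diagT_of_tmul (g : π) (m : M) (n : N) :
    diagT M N (of ℤ π g) (m ⊗ₜ n)
      = ((of ℤ π g : MonoidAlgebra ℤ π) • m) ⊗ₜ ((of ℤ π g : MonoidAlgebra ℤ π) • n) := by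
  simp only [diagT, Representation.asAlgebraHom_of, Representation.tprod_apply]
  rfl

theorem diagT_one : diagT M N (1 : MonoidAlgebra ℤ π) = LinearMap.id := map_one _

theorem diagT_zero : diagT M N (0 : MonoidAlgebra ℤ π) = 0 := map_zero _

theorem diagT_add (x y : MonoidAlgebra ℤ π) : diagT M N (x + y) = diagT M N x + diagT M N y :=
  map_add _ x y

theorem diagT_sub (x y : MonoidAlgebra ℤ π) : diagT M N (x - y) = diagT M N x - diagT M N y :=
  map_sub _ x y

theorem diagT_mul (x y : MonoidAlgebra ℤ π) : diagT M N (x * y) = diagT M N x * diagT M N y :=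
  map_mul _ x y

theorem diagT_cocycle_ext {β : Type*} (ρ : FreeGroup β →* π) {f g : FreeGroup β → M ⊗[ℤ] N}
    (hf : ∀ u v, f (u * v) = f u + diagT M N (of ℤ π (ρ u)) (f v))
    (hg : ∀ u v, g (u * v) = g u + diagT M N (of ℤ π (ρ u)) (g v))
    (hof : ∀ i, f (FreeGroup.of i) = g (FreeGroup.of i)) : f = g :=
  FreeGroup.cocycle_ext
    ((Representation.asAlgebraHom ((repOf M).tprod (repOf N))).toMonoidHom.comp
      ((of ℤ π).comp ρ)) hf hg hof

theorem map_diagT_of {M' N' : Type*} [AddCommGroup M'] [Module (MonoidAlgebra ℤ π) M']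
    [AddCommGroup N'] [Module (MonoidAlgebra ℤ π) N'] (f : M →ₗ[ℤ] M') (f' : N →ₗ[ℤ] N')
    (hf : ∀ (c : MonoidAlgebra ℤ π) m, f (c • m) = c • f m)
    (hf' : ∀ (c : MonoidAlgebra ℤ π) n, f' (c • n) = c • f' n) (g : π) (z : M ⊗[ℤ] N) :
    map f f' (diagT M N (of ℤ π g) z) = diagT M' N' (of ℤ π g) (map f f' z) := by
  induction z using TensorProduct.induction_on with
  | zero => simp only [map_zero]
  | tmul m n => simp only [diagT_of_tmul, map_tmul, hf, hf']
  | add x y hx hy => simp only [map_add, hx, hy]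

noncomputable def diagLift {ι : Type*} [Fintype ι] (v : ι → M ⊗[ℤ] N)
    (x : ι → MonoidAlgebra ℤ π) : M ⊗[ℤ] N :=
  ∑ i, diagT M N (x i) (v i)

variable {ι : Type*} [Fintype ι] (v : ι → M ⊗[ℤ] N)

theorem diagLift_add (x y : ι → MonoidAlgebra ℤ π) :
    diagLift v (x + y) = diagLift v x + diagLift v y := by
  simp only [diagLift, Pi.add_apply, diagT_add, LinearMap.add_apply, Finset.sum_add_distrib]

theorem diagLift_smul (c : MonoidAlgebra ℤ π) (x : ι → MonoidAlgebra ℤ π) :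
    diagLift v (c • x) = diagT M N c (diagLift v x) := by
  simp only [diagLift, Pi.smul_apply, smul_eq_mul, diagT_mul, Module.End.mul_apply, map_sum]

theorem diagLift_single [DecidableEq ι] (i : ι) :
    diagLift v (Pi.single i (1 : MonoidAlgebra ℤ π)) = v i := by
  rw [diagLift, Finset.sum_eq_single i]
  · rw [Pi.single_eq_same, diagT_one, LinearMap.id_apply]
  · intro j _ hj
    rw [Pi.single_eq_of_ne hj, diagT_zero, LinearMap.zero_apply]
  · exact fun hi => absurd (Finset.mem_univ i) hi

end DiagonalAction

section PresentationComplex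

variable (π) {a b : ℕ} (ρ : FreeGroup (Fin a) →* π)

theorem d1L_apply (x : Fin a → MonoidAlgebra ℤ π) :
    d1L π a ρ x = ∑ i, x i * (giA π ρ i - 1) := by
  simp [d1L]

theorem d1L_single (i : Fin a) : d1L π a ρ (Pi.single i 1) = giA π ρ i - 1 := by
  simp [d1L_apply, Pi.single_apply]

theorem d1L_smul (c : MonoidAlgebra ℤ π) (x : Fin a → MonoidAlgebra ℤ π) :
    d1L π a ρ (c • x) = c • d1L π a ρ x := by
  simp [d1L_apply, Finset.mul_sum, mul_assoc]

theorem d2L_single (r : Fin b → FreeGroup (Fin a))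
    (α : FreeGroup (Fin a) → (Fin a → MonoidAlgebra ℤ π)) (j : Fin b) :
    d2L π a b ρ r α (Pi.single j 1) = α (r j) := by
  simp [d2L, LinearMap.toSpanSingleton, Pi.single_apply]

theorem D01_eq_diagLift :
    D01 π a ρ = diagLift fun i => (1 : MonoidAlgebra ℤ π) ⊗ₜ Pi.single i 1 :=
  rfl

theorem D10_eq_diagLift : D10 π a ρ = diagLift fun i => Pi.single i 1 ⊗ₜ giA π ρ i :=
  rfl

variable {α : FreeGroup (Fin a) → (Fin a → MonoidAlgebra ℤ π)}
  {γ : FreeGroup (Fin a) → (Fin a → MonoidAlgebra ℤ π) ⊗[ℤ] (Fin a → MonoidAlgebra ℤ π)}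

theorem d1L_alpha (hα1 : ∀ i : Fin a, α (FreeGroup.of i) = Pi.single i 1)
    (hα : ∀ u v : FreeGroup (Fin a), α (u * v) = α u + (of ℤ π (ρ u)) • α v)
    (w : FreeGroup (Fin a)) :
    d1L π a ρ (α w) = of ℤ π (ρ w) - 1 := by
  refine congrFun (FreeGroup.cocycle_ext ((repOf (MonoidAlgebra ℤ π)).comp ρ)
    (f := fun w => d1L π a ρ (α w)) (g := fun w => of ℤ π (ρ w) - 1) ?hf ?hg ?hof) w
  case hf =>
    intro u v
    simp only [hα, map_add, d1L_smul, MonoidHom.comp_apply, repOf_apply]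
  case hg =>
    intro u v
    simp only [MonoidHom.comp_apply, repOf_apply, map_mul, smul_eq_mul, mul_sub, mul_one]
    abel
  case hof =>
    intro i
    simp only [hα1, d1L_single, giA]

theorem D01_alpha (hα1 : ∀ i : Fin a, α (FreeGroup.of i) = Pi.single i 1)
    (hα : ∀ u v : FreeGroup (Fin a), α (u * v) = α u + (of ℤ π (ρ u)) • α v)
    (hγ0 : ∀ i : Fin a, γ (FreeGroup.of i) = 0)
    (hγ : ∀ u v : FreeGroup (Fin a),
      γ (u * v) = γ u + diagT _ _ (of ℤ π (ρ u)) (γ v) + (α u) ⊗ₜ[ℤ] ((of ℤ π (ρ u)) • α v))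
    (w : FreeGroup (Fin a)) :
    D01 π a ρ (α w) = (1 : MonoidAlgebra ℤ π) ⊗ₜ α w + map (d1L π a ρ) LinearMap.id (γ w) := by
  refine congrFun (diagT_cocycle_ext ρ (f := fun w => D01 π a ρ (α w))
    (g := fun w => (1 : MonoidAlgebra ℤ π) ⊗ₜ α w + map (d1L π a ρ) LinearMap.id (γ w))
    ?hf ?hg ?hof) w
  case hf =>
    intro u v
    simp only [hα, D01_eq_diagLift, diagLift_add, diagLift_smul]
  case hg =>
    intro u v
    simp only [hα, hγ, map_add, diagT_of_tmul,
      map_diagT_of _ LinearMap.id (d1L_smul π ρ) (fun _ _ => rfl), map_tmul, d1L_alpha π ρ hα1 hα,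
      LinearMap.id_apply, tmul_add, sub_tmul, smul_eq_mul, mul_one]
    abel
  case hof =>
    intro i
    simp only [hα1, hγ0, map_zero, add_zero, D01_eq_diagLift, diagLift_single]

theorem D10_alpha (hα1 : ∀ i : Fin a, α (FreeGroup.of i) = Pi.single i 1)
    (hα : ∀ u v : FreeGroup (Fin a), α (u * v) = α u + (of ℤ π (ρ u)) • α v)
    (hγ0 : ∀ i : Fin a, γ (FreeGroup.of i) = 0)
    (hγ : ∀ u v : FreeGroup (Fin a),
      γ (u * v) = γ u + diagT _ _ (of ℤ π (ρ u)) (γ v) + (α u) ⊗ₜ[ℤ] ((of ℤ π (ρ u)) • α v))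
    (w : FreeGroup (Fin a)) :
    D10 π a ρ (α w) = α w ⊗ₜ (of ℤ π (ρ w)) - map LinearMap.id (d1L π a ρ) (γ w) := by
  refine congrFun (diagT_cocycle_ext ρ (f := fun w => D10 π a ρ (α w))
    (g := fun w => α w ⊗ₜ (of ℤ π (ρ w)) - map LinearMap.id (d1L π a ρ) (γ w))
    ?hf ?hg ?hof) w
  case hf =>
    intro u v
    simp only [hα, D10_eq_diagLift, diagLift_add, diagLift_smul]
  case hg =>
    intro u v
    simp only [hα, hγ, map_add, map_sub, diagT_of_tmul,
      map_diagT_of LinearMap.id _ (fun _ _ => rfl) (d1L_smul π ρ), map_tmul, d1L_smul,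
      d1L_alpha π ρ hα1 hα, LinearMap.id_apply, add_tmul, tmul_sub, smul_eq_mul, mul_sub, mul_one,
      map_mul]
    abel
  case hof =>
    intro i
    simp only [hα1, hγ0, map_zero, sub_zero, D10_eq_diagLift, diagLift_single, giA]

end PresentationComplex

end stmt7

theorem stmt_7_general (π : Type*) [Group π] (a b : ℕ)
    (ρ : FreeGroup (Fin a) →* π)
    (r : Fin b → FreeGroup (Fin a))
    (hrel : ∀ j : Fin b, ρ (r j) = 1)
    (α : FreeGroup (Fin a) → (Fin a → MonoidAlgebra ℤ π))
    (hα1 : ∀ i : Fin a, α (FreeGroup.of i) = Pi.single i 1)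
    (hα : ∀ u v : FreeGroup (Fin a),
      α (u * v) = α u + (MonoidAlgebra.of ℤ π (ρ u)) • α v)
    (γ : FreeGroup (Fin a) →
      (Fin a → MonoidAlgebra ℤ π) ⊗[ℤ] (Fin a → MonoidAlgebra ℤ π))
    (hγ0 : ∀ i : Fin a, γ (FreeGroup.of i) = 0)
    (hγ : ∀ u v : FreeGroup (Fin a),
      γ (u * v) = γ u + stmt7.diagT _ _ (MonoidAlgebra.of ℤ π (ρ u)) (γ v)
        + (α u) ⊗ₜ[ℤ] ((MonoidAlgebra.of ℤ π (ρ u)) • α v)) :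
    -- ∂_⊗(Δ₀(h¹ᵢ)) = Δ₀(∂₁h¹ᵢ):
    (∀ i : Fin a,
      TensorProduct.map LinearMap.id (stmt7.d1L π a ρ)
          ((1 : MonoidAlgebra ℤ π) ⊗ₜ[ℤ] Pi.single i (1 : MonoidAlgebra ℤ π))
        + TensorProduct.map (stmt7.d1L π a ρ) LinearMap.id
            ((Pi.single i (1 : MonoidAlgebra ℤ π)) ⊗ₜ[ℤ] stmt7.giA π ρ i)
      = stmt7.D00 π (stmt7.giA π ρ i - 1)) ∧
    -- ∂_⊗(Δ₀(h²ⱼ)) = Δ₀(∂₂h²ⱼ), component in C₀ ⊗ C₁: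
    (∀ j : Fin b,
      TensorProduct.map LinearMap.id (stmt7.d2L π a b ρ r α)
          ((1 : MonoidAlgebra ℤ π) ⊗ₜ[ℤ] Pi.single j (1 : MonoidAlgebra ℤ π))
        + (-1 : ℤ) • TensorProduct.map (stmt7.d1L π a ρ) LinearMap.id (-(γ (r j)))
      = stmt7.D01 π a ρ (α (r j))) ∧
    -- ∂_⊗(Δ₀(h²ⱼ)) = Δ₀(∂₂h²ⱼ), component in C₁ ⊗ C₀:
    (∀ j : Fin b,
      TensorProduct.map LinearMap.id (stmt7.d1L π a ρ) (-(γ (r j)))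
        + TensorProduct.map (stmt7.d2L π a b ρ r α) LinearMap.id
            ((Pi.single j (1 : MonoidAlgebra ℤ π)) ⊗ₜ[ℤ] (1 : MonoidAlgebra ℤ π))
      = stmt7.D10 π a ρ (α (r j))) := by
  open stmt7 TensorProduct in
  refine ⟨fun i => ?_, fun j => ?_, fun j => ?_⟩
  · rw [map_tmul, map_tmul, LinearMap.id_apply, LinearMap.id_apply, d1L_single, D00, diagT_sub,
      LinearMap.sub_apply, diagT_one, LinearMap.id_apply, giA, diagT_of_tmul, smul_eq_mul,
      mul_one, tmul_sub, sub_tmul]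
    abel
  · rw [map_tmul, LinearMap.id_apply, d2L_single, map_neg, smul_neg, neg_one_smul, neg_neg,
      D01_alpha π ρ hα1 hα hγ0 hγ]
  · rw [map_neg, map_tmul, LinearMap.id_apply, d2L_single, D10_alpha π ρ hα1 hα hγ0 hγ, hrel j,
      map_one]
    abel

/-- Let `π` be the group presented by `⟨g₁,…,g_a | r₁,…,r_b⟩`
with presentation complex `C₂ → C₁ → C₀` over `ℤ[π]` (`C₀ = ℤ[π]h⁰`,
`C₁ = ⊕ᵢℤ[π]h¹ᵢ`, `C₂ = ⊕ⱼℤ[π]h²ⱼ`, `∂₁(h¹ᵢ) = (gᵢ-1)h⁰`, `∂₂(h²ⱼ) = α(rⱼ)`),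
`α : F → C₁` the unique derivation with `α(gᵢ) = h¹ᵢ`, and
`γ : F → C₁ ⊗_ℤ C₁` the unique map with `γ(gᵢ) = 0` and
`γ(uv) = γ(u) + u·γ(v) + α(u) ⊗ u·α(v)`.  Then the `ℤ[π]`-module map `Δ₀`
(for the diagonal action) determined by `Δ₀(h⁰) = h⁰⊗h⁰`,
`Δ₀(h¹ᵢ) = h⁰⊗h¹ᵢ + h¹ᵢ⊗gᵢh⁰`, `Δ₀(h²ⱼ) = h⁰⊗h²ⱼ + h²ⱼ⊗h⁰ - γ(rⱼ)` is a chain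
map in degrees ≤ 2:  `∂_⊗(Δ₀(h¹ᵢ)) = Δ₀(∂₁h¹ᵢ)` and `∂_⊗(Δ₀(h²ⱼ)) = Δ₀(∂₂h²ⱼ)`
for all `i, j`, with the sign convention `∂_⊗(x⊗y) = x⊗∂y + (-1)^q ∂x⊗y`
(`q = deg y`). -/
theorem stmt_7 (π : Type*) [Group π] (a b : ℕ)
    (ρ : FreeGroup (Fin a) →* π)
    (r : Fin b → FreeGroup (Fin a))
    (hsurj : Function.Surjective ρ)
    (hker : ρ.ker = Subgroup.normalClosure (Set.range r))
    (hrel : ∀ j : Fin b, ρ (r j) = 1)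
    (α : FreeGroup (Fin a) → (Fin a → MonoidAlgebra ℤ π))
    (hα1 : ∀ i : Fin a, α (FreeGroup.of i) = Pi.single i 1)
    (hα : ∀ u v : FreeGroup (Fin a),
      α (u * v) = α u + (MonoidAlgebra.of ℤ π (ρ u)) • α v)
    (γ : FreeGroup (Fin a) →
      (Fin a → MonoidAlgebra ℤ π) ⊗[ℤ] (Fin a → MonoidAlgebra ℤ π))
    (hγ0 : ∀ i : Fin a, γ (FreeGroup.of i) = 0)
    (hγ : ∀ u v : FreeGroup (Fin a),
      γ (u * v) = γ u + stmt7.diagT _ _ (MonoidAlgebra.of ℤ π (ρ u)) (γ v)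
        + (α u) ⊗ₜ[ℤ] ((MonoidAlgebra.of ℤ π (ρ u)) • α v)) :
    -- ∂_⊗(Δ₀(h¹ᵢ)) = Δ₀(∂₁h¹ᵢ):
    (∀ i : Fin a,
      TensorProduct.map LinearMap.id (stmt7.d1L π a ρ)
          ((1 : MonoidAlgebra ℤ π) ⊗ₜ[ℤ] Pi.single i (1 : MonoidAlgebra ℤ π))
        + TensorProduct.map (stmt7.d1L π a ρ) LinearMap.id
            ((Pi.single i (1 : MonoidAlgebra ℤ π)) ⊗ₜ[ℤ] stmt7.giA π ρ i)
      = stmt7.D00 π (stmt7.giA π ρ i - 1)) ∧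
    -- ∂_⊗(Δ₀(h²ⱼ)) = Δ₀(∂₂h²ⱼ), component in C₀ ⊗ C₁:
    (∀ j : Fin b,
      TensorProduct.map LinearMap.id (stmt7.d2L π a b ρ r α)
          ((1 : MonoidAlgebra ℤ π) ⊗ₜ[ℤ] Pi.single j (1 : MonoidAlgebra ℤ π))
        + (-1 : ℤ) • TensorProduct.map (stmt7.d1L π a ρ) LinearMap.id (-(γ (r j)))
      = stmt7.D01 π a ρ (α (r j))) ∧
    -- ∂_⊗(Δ₀(h²ⱼ)) = Δ₀(∂₂h²ⱼ), component in C₁ ⊗ C₀: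
    (∀ j : Fin b,
      TensorProduct.map LinearMap.id (stmt7.d1L π a ρ) (-(γ (r j)))
        + TensorProduct.map (stmt7.d2L π a b ρ r α) LinearMap.id
            ((Pi.single j (1 : MonoidAlgebra ℤ π)) ⊗ₜ[ℤ] (1 : MonoidAlgebra ℤ π))
      = stmt7.D10 π a ρ (α (r j))) :=
  stmt_7_general π a b ρ r hrel α hα1 hα γ hγ0 hγ
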